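/- arXiv:1509.02068 — 4 statements merged into one kernel-verified Lean document; each statement's English description precedes it below -/
import Mathlib

section
/- Let $1 < a < \infty$, $0 < b < \infty$, and $c_k \ge 0$ for $k \in \mathbb{Z}$. Then there exists a constant $C = C(a,b)$ such that $\sum_{k\in\mathbb{Z}}\big(\sum_{j\in\mathbb{Z}} a^{-|j-k|} c_j\big)^b \le C \sum_{j\in\mathbb{Z}} c_j^b$. -/
open ENNReal

/-!
For `b ≤ 1` the map `x ↦ x ^ b` is subadditive, so the power can be moved inside the inner sum;
for `b ≥ 1` the weighted Hölder inequality with weights `a ^ (-|j - k|)` gives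
`(∑ⱼ a ^ (-|j - k|) cⱼ) ^ b ≤ S ^ (b - 1) ∑ⱼ a ^ (-|j - k|) cⱼ ^ b` with `S = ∑ₘ a ^ (-|m|)`.
In both cases summing over `k` and exchanging the sums leaves a translate of the kernel, whose
(powered) sum is a finite two-sided geometric series.
-/

namespace ENNReal

variable {ι : Type*}

theorem rpow_tsum_le_tsum_rpow {p : ℝ} (hp₀ : 0 < p) (hp₁ : p ≤ 1) (f : ι → ℝ≥0∞) :
    (∑' i, f i) ^ p ≤ ∑' i, f i ^ p := by
  rw [ENNReal.tsum_eq_iSup_sum, ← orderIsoRpow_apply p hp₀, OrderIso.map_iSup]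
  refine iSup_le fun s => le_trans ?_ (ENNReal.sum_le_tsum s)
  exact Finset.le_sum_of_subadditive _ (zero_rpow_of_pos hp₀).le
    (fun x y => rpow_add_le_add_rpow x y hp₀.le hp₁) s f

theorem inner_le_weight_mul_Lp_tsum {p : ℝ} (hp : 1 ≤ p) (w f : ι → ℝ≥0∞) :
    ∑' i, w i * f i ≤ (∑' i, w i) ^ (1 - p⁻¹) * (∑' i, w i * f i ^ p) ^ p⁻¹ := by
  have hp_inv : p⁻¹ ≤ 1 := inv_le_one_of_one_le₀ hp
  rw [ENNReal.tsum_eq_iSup_sum]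
  refine iSup_le fun s => (inner_le_weight_mul_Lp_of_nonneg s hp w f).trans ?_
  exact mul_le_mul' (rpow_le_rpow (ENNReal.sum_le_tsum s) (by linarith))
    (rpow_le_rpow (ENNReal.sum_le_tsum s) (by positivity))

theorem rpow_tsum_mul_le_weight_mul_tsum_rpow {p : ℝ} (hp : 1 ≤ p) (w f : ι → ℝ≥0∞) :
    (∑' i, w i * f i) ^ p ≤ (∑' i, w i) ^ (p - 1) * ∑' i, w i * f i ^ p := by
  have hp₀ : p ≠ 0 := by positivity
  calc (∑' i, w i * f i) ^ p
      ≤ ((∑' i, w i) ^ (1 - p⁻¹) * (∑' i, w i * f i ^ p) ^ p⁻¹) ^ p := by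
        gcongr; exact inner_le_weight_mul_Lp_tsum hp w f
    _ = (∑' i, w i) ^ (p - 1) * ∑' i, w i * f i ^ p := by
        rw [mul_rpow_of_nonneg _ _ (by positivity), ← rpow_mul, ← rpow_mul, sub_mul, one_mul,
          inv_mul_cancel₀ hp₀, rpow_one]

theorem tsum_int_pow_natAbs (ρ : ℝ≥0∞) : ∑' m : ℤ, ρ ^ m.natAbs = (1 + ρ) * (1 - ρ)⁻¹ := by
  rw [← tsum_nat_add_neg_add_one ENNReal.summable, ← ENNReal.tsum_geometric, ← ENNReal.tsum_mul_left]
  refine tsum_congr fun n => ?_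
  have : (-((n : ℤ) + 1)).natAbs = n + 1 := by omega
  rw [Int.natAbs_natCast, this, pow_succ]
  ring

theorem zpow_neg_abs_rpow (A : ℝ≥0∞) (m : ℤ) (t : ℝ) :
    (A ^ (-|m|)) ^ t = (A⁻¹ ^ t) ^ m.natAbs := by
  rw [Int.abs_eq_natAbs, ENNReal.zpow_neg, zpow_natCast, ENNReal.inv_pow, ← rpow_natCast, ← rpow_natCast,
    ← rpow_mul, ← rpow_mul, mul_comm]

theorem tsum_zpow_neg_abs_rpow_lt_top {A : ℝ≥0∞} (hA : 1 < A) {t : ℝ} (ht : 0 < t) :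
    ∑' m : ℤ, (A ^ (-|m|)) ^ t < ⊤ := by
  have hρ : A⁻¹ ^ t < 1 := rpow_lt_one (ENNReal.inv_lt_one.mpr hA) ht
  simp_rw [zpow_neg_abs_rpow, tsum_int_pow_natAbs]
  exact mul_lt_top (add_lt_top.mpr ⟨one_lt_top, hρ.trans one_lt_top⟩)
    (inv_lt_top.mpr (tsub_pos_of_lt hρ))

end ENNReal

section Convolution

variable {G : Type*} [AddGroup G] (K : G → ℝ≥0∞)

theorem tsum_tsum_kernel_mul (g : G → ℝ≥0∞) :
    ∑' k, ∑' j, K (j - k) * g j = (∑' m, K m) * ∑' j, g j := by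
  rw [ENNReal.tsum_comm, ← ENNReal.tsum_mul_left]
  refine tsum_congr fun j => ?_
  rw [ENNReal.tsum_mul_right]
  exact congrArg (· * g j) ((Equiv.subLeft j).tsum_eq K)

theorem tsum_rpow_tsum_kernel_mul_le_of_le_one {p : ℝ} (hp₀ : 0 < p) (hp₁ : p ≤ 1)
    (c : G → ℝ≥0∞) :
    ∑' k, (∑' j, K (j - k) * c j) ^ p ≤ (∑' m, K m ^ p) * ∑' j, c j ^ p := calc
  ∑' k, (∑' j, K (j - k) * c j) ^ p ≤ ∑' k, ∑' j, K (j - k) ^ p * c j ^ p := by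
    gcongr with k
    simp_rw [← mul_rpow_of_nonneg _ _ hp₀.le]
    exact rpow_tsum_le_tsum_rpow hp₀ hp₁ _
  _ = (∑' m, K m ^ p) * ∑' j, c j ^ p := tsum_tsum_kernel_mul (K · ^ p) _

theorem tsum_rpow_tsum_kernel_mul_le_of_one_le {p : ℝ} (hp : 1 ≤ p) (c : G → ℝ≥0∞) :
    ∑' k, (∑' j, K (j - k) * c j) ^ p ≤ (∑' m, K m) ^ (p - 1) * (∑' m, K m) * ∑' j, c j ^ p := calc
  ∑' k, (∑' j, K (j - k) * c j) ^ p
      ≤ ∑' k, (∑' m, K m) ^ (p - 1) * ∑' j, K (j - k) * c j ^ p := by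
    gcongr with k
    rw [← (Equiv.subRight k).tsum_eq K]
    exact rpow_tsum_mul_le_weight_mul_tsum_rpow hp _ c
  _ = (∑' m, K m) ^ (p - 1) * (∑' m, K m) * ∑' j, c j ^ p := by
    rw [ENNReal.tsum_mul_left, tsum_tsum_kernel_mul, mul_assoc]

end Convolution

theorem summing_lemma (a : ℝ) (ha : 1 < a) (b : ℝ) (hb : 0 < b) :
    ∃ C : ℝ≥0∞, C < ⊤ ∧ ∀ c : ℤ → ℝ≥0∞,
      ∑' k : ℤ, (∑' j : ℤ, ENNReal.ofReal a ^ (-|j - k|) * c j) ^ b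
        ≤ C * ∑' j : ℤ, c j ^ b := by
  have hA : 1 < ENNReal.ofReal a := ENNReal.one_lt_ofReal.mpr ha
  set K : ℤ → ℝ≥0∞ := fun m => ENNReal.ofReal a ^ (-|m|)
  rcases le_or_gt b 1 with hb₁ | hb₁
  · exact ⟨_, tsum_zpow_neg_abs_rpow_lt_top hA hb,
      tsum_rpow_tsum_kernel_mul_le_of_le_one K hb hb₁⟩
  · have hK : ∑' m, K m < ⊤ := by simpa using tsum_zpow_neg_abs_rpow_lt_top hA one_pos
    exact ⟨_, mul_lt_top (rpow_lt_top_of_nonneg (by linarith) hK.ne) hK,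
      tsum_rpow_tsum_kernel_mul_le_of_one_le K hb₁.le⟩
end

section
/- Let $u_i$ be measurable a.e.-finite functions on a metric measure space $X$ with fractional $s$-gradients $(g_{i,k})_{k\in\mathbb{Z}}$, for $i \in \mathbb{N}$. Set $u = \sup_{i\in\mathbb{N}} u_i$ and $g_k = \sup_{i\in\mathbb{N}} g_{i,k}$. If $u$ is finite almost everywhere, then $(g_k)_{k\in\mathbb{Z}}$ is a fractional $s$-gradient of $u$. -/
open MeasureTheory ENNReal

variable {X : Type*} [MetricSpace X] [MeasurableSpace X]

/-- `(g k)` is a fractional `s`-gradient of `u`: the `g k` are measurable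
(nonnegative, taking values in `[0,∞]`) and there is a null set `E` such that
`|u x - u y| ≤ d(x,y)^s * (g k x + g k y)` whenever `x, y ∉ E` and
`2^(-k-1) ≤ d(x,y) < 2^(-k)`. -/
def IsFracGrad (μ : Measure X) (s : ℝ) (u : X → ℝ) (g : ℤ → X → ℝ≥0∞) : Prop :=
  (∀ k, Measurable (g k)) ∧
  ∃ E : Set X, μ E = 0 ∧ ∀ k : ℤ, ∀ x ∉ E, ∀ y ∉ E,
    (2 : ℝ) ^ (-k - 1) ≤ dist x y → dist x y < (2 : ℝ) ^ (-k) →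
      ENNReal.ofReal |u x - u y| ≤ ENNReal.ofReal (dist x y ^ s) * (g k x + g k y)

theorem isFracGrad_iSup (μ : Measure X) (s : ℝ) (hs : 0 < s)
    (u : ℕ → X → ℝ) (g : ℕ → ℤ → X → ℝ≥0∞)
    (hg : ∀ i, IsFracGrad μ s (u i) (g i))
    (hfin : ∀ᵐ x ∂μ, BddAbove (Set.range fun i => u i x)) :
    IsFracGrad μ s (fun x => ⨆ i, u i x) (fun k x => ⨆ i, g i k x) := by
  choose hmeas E hE0 hineq using hg
  refine ⟨fun k => Measurable.iSup fun i => hmeas i k, ?_⟩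
  refine ⟨(⋃ i, E i) ∪ {x | ¬ BddAbove (Set.range fun i => u i x)}, ?_, ?_⟩
  · refine measure_union_null (by simpa using fun i => hE0 i) ?_
    exact hfin
  intro k x hx y hy h1 h2
  simp only [Set.mem_union, Set.mem_iUnion, Set.mem_setOf_eq, not_or, not_exists,
    not_not] at hx hy
  obtain ⟨hxE, hxB⟩ := hx
  obtain ⟨hyE, hyB⟩ := hy
  set M : ℝ≥0∞ := ENNReal.ofReal (dist x y ^ s) * ((⨆ i, g i k x) + ⨆ i, g i k y) with hM
  have key : ∀ i, ENNReal.ofReal |u i x - u i y| ≤ M := fun i => by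
    refine (hineq i k x (hxE i) y (hyE i) h1 h2).trans ?_
    exact mul_le_mul_right (add_le_add (le_iSup (fun j => g j k x) i)
      (le_iSup (fun j => g j k y) i)) _
  by_cases hMtop : M = ⊤
  · simp [hMtop]
  have habs : ∀ i, |u i x - u i y| ≤ M.toReal := fun i =>
    (ENNReal.ofReal_le_iff_le_toReal hMtop).mp (key i)
  have h1 : (⨆ i, u i x) - (⨆ i, u i y) ≤ M.toReal := by
    rw [sub_le_iff_le_add]
    refine ciSup_le fun i => ?_
    have := (abs_le.mp (habs i)).2
    have : u i x ≤ u i y + M.toReal := by linarith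
    exact this.trans (by rw [add_comm]; gcongr; exact le_ciSup hyB i)
  have h2' : (⨆ i, u i y) - (⨆ i, u i x) ≤ M.toReal := by
    rw [sub_le_iff_le_add]
    refine ciSup_le fun i => ?_
    have := (abs_le.mp (habs i)).1
    have : u i y ≤ u i x + M.toReal := by linarith
    exact this.trans (by rw [add_comm]; gcongr; exact le_ciSup hxB i)
  have : |(⨆ i, u i x) - (⨆ i, u i y)| ≤ M.toReal := abs_sub_le_iff.mpr ⟨h1, h2'⟩
  calc ENNReal.ofReal |(⨆ i, u i x) - (⨆ i, u i y)| ≤ ENNReal.ofReal M.toReal :=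
        ENNReal.ofReal_le_ofReal this
    _ = M := ENNReal.ofReal_toReal hMtop
end

section
/- Let $A$ be a measurable set of finite positive measure, $u$ measurable, and $0 < \gamma \le 1/2$. Then $m_{|u - m_u^{\gamma}(A)|}^{\gamma}(A) \le 2 \inf_{c \in \mathbb{R}} m_{|u-c|}^{\gamma}(A)$. -/
open MeasureTheory ENNReal

variable {α : Type*} [MeasurableSpace α]

/-- The `γ`-median of `u` over `A`:
`m_u^γ(A) = inf { a ∈ ℝ : μ (A ∩ {u > a}) < γ * μ A }`. -/
noncomputable def med (μ : Measure α) (γ : ℝ) (u : α → ℝ) (A : Set α) : ℝ :=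
  sInf {a : ℝ | μ (A ∩ {x | a < u x}) < ENNReal.ofReal γ * μ A}

/-! The `γ`-median is monotone and shifts with constants, so `f ≤ g + k` on `A` gives
`m_f ≤ m_g + k`; by the triangle inequality `m_{|u - m|} ≤ m_{|u - c|} + |m - c|` for
`m = m_u^γ(A)`. It remains to bound `|m - c|` by `m_{|u - c|}`: the upper bound is again
monotonicity (`u ≤ |u - c| + c`), and the lower bound holds because for `γ ≤ 1/2` two sets of
measure `< γ μ(A)` cannot cover `A`, so `k ≤ f + g` on `A` forces `k ≤ m_f + m_g`. -/

def medSet (μ : Measure α) (γ : ℝ) (f : α → ℝ) (A : Set α) : Set ℝ :=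
  {a : ℝ | μ (A ∩ {x | a < f x}) < ENNReal.ofReal γ * μ A}

section Median

open Filter Topology

variable {μ : Measure α} {γ : ℝ} {A : Set α} {f g : α → ℝ}

theorem medSet_nonempty (hA : μ A ≠ ∞) (hA0 : μ A ≠ 0) (hγ : 0 < γ) (hf : Measurable f) :
    (medSet μ γ f A).Nonempty := by
  have hsuper : ∀ a : ℝ, MeasurableSet {x | a < f x} := fun a =>
    measurableSet_lt measurable_const hf
  have htend : Tendsto (fun a : ℝ => μ.restrict A {x | a < f x}) atTop (𝓝 0) := by
    have := tendsto_measure_iInter_atTop (μ := μ.restrict A) (s := fun a : ℝ => {x | a < f x})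
      (fun a => (hsuper a).nullMeasurableSet) (fun a b hab x hx => hab.trans_lt hx)
      ⟨0, (measure_mono (Set.subset_univ _)).trans_lt (by simpa using hA.lt_top) |>.ne⟩
    rwa [Set.iInter_eq_empty_iff.2 fun x => ⟨f x, lt_irrefl (f x)⟩, measure_empty] at this
  have hsmall : 0 < ENNReal.ofReal γ * μ A := ENNReal.mul_pos (ENNReal.ofReal_pos.2 hγ).ne' hA0
  obtain ⟨a, ha⟩ := (htend.eventually_lt_const hsmall).exists
  refine ⟨a, ?_⟩
  rwa [medSet, Set.mem_ofPred_eq, Set.inter_comm, ← Measure.restrict_apply (hsuper a)]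

theorem medSet_bddBelow (hA : μ A ≠ ∞) (hA0 : μ A ≠ 0) (hγ : γ < 1) :
    BddBelow (medSet μ γ f A) := by
  have htend : Tendsto (fun a : ℝ => μ (A ∩ {x | a < f x})) atBot (𝓝 (μ A)) := by
    have := tendsto_measure_iUnion_atBot (μ := μ) (s := fun a : ℝ => A ∩ {x | a < f x})
      fun a b hab x hx => ⟨hx.1, hab.trans_lt hx.2⟩
    rwa [← Set.inter_iUnion, Set.iUnion_eq_univ_iff.2 fun x => ⟨f x - 1, by simp⟩,
      Set.inter_univ] at this
  have hlt : ENNReal.ofReal γ * μ A < μ A :=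
    calc ENNReal.ofReal γ * μ A < 1 * μ A :=
          ENNReal.mul_lt_mul_left hA0 hA (ENNReal.ofReal_lt_one.2 hγ)
      _ = μ A := one_mul _
  obtain ⟨b, hb⟩ := (htend.eventually_const_lt hlt).exists
  refine ⟨b, fun a ha => le_of_not_gt fun (hab : a < b) => ?_⟩
  have hsub : A ∩ {x | b < f x} ⊆ A ∩ {x | a < f x} := fun x hx => ⟨hx.1, hab.trans hx.2⟩
  exact (hb.trans_le (measure_mono hsub)).not_gt ha

theorem med_le_med_add (hf : BddBelow (medSet μ γ f A)) (hg : (medSet μ γ g A).Nonempty)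
    (k : ℝ) (hfg : ∀ x ∈ A, f x ≤ g x + k) : med μ γ f A ≤ med μ γ g A + k := by
  rw [← sub_le_iff_le_add]
  refine le_csInf hg fun a ha => sub_le_iff_le_add.2 (csInf_le hf ?_)
  have hsub : A ∩ {x | a + k < f x} ⊆ A ∩ {x | a < g x} := fun x hx =>
    ⟨hx.1, show a < g x by linarith [hfg x hx.1, show a + k < f x from hx.2]⟩
  exact (measure_mono hsub).trans_lt ha

theorem le_med_add_med (hγ : γ ≤ 1 / 2) (hf : (medSet μ γ f A).Nonempty)
    (hg : (medSet μ γ g A).Nonempty) (k : ℝ) (hfg : ∀ x ∈ A, k ≤ f x + g x) :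
    k ≤ med μ γ f A + med μ γ g A := by
  have hhalf : ENNReal.ofReal γ * μ A ≤ μ A / 2 := by
    rw [ENNReal.div_eq_inv_mul]
    gcongr
    exact (ENNReal.ofReal_le_ofReal hγ).trans_eq (by simp)
  have hcover : ∀ a ∈ medSet μ γ f A, ∀ b ∈ medSet μ γ g A, k ≤ a + b := by
    intro a ha b hb
    by_contra! hab
    have hA : A ⊆ (A ∩ {x | a < f x}) ∪ (A ∩ {x | b < g x}) := fun x hx => by
      by_cases hfx : a < f x
      · exact Or.inl ⟨hx, hfx⟩
      · exact Or.inr ⟨hx, show b < g x by linarith [hfg x hx, not_lt.1 hfx]⟩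
    refine (lt_irrefl (μ A)) (calc
      μ A ≤ μ (A ∩ {x | a < f x}) + μ (A ∩ {x | b < g x}) :=
        (measure_mono hA).trans (measure_union_le _ _)
      _ < ENNReal.ofReal γ * μ A + ENNReal.ofReal γ * μ A := ENNReal.add_lt_add ha hb
      _ ≤ μ A / 2 + μ A / 2 := add_le_add hhalf hhalf
      _ = μ A := ENNReal.add_halves _)
  rw [← sub_le_iff_le_add']
  refine le_csInf hg fun b hb => sub_le_comm.1 (le_csInf hf fun a ha => ?_)
  exact sub_le_iff_le_add.2 (hcover a ha b hb)

end Median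

theorem med_dist_to_med (μ : Measure α) (A : Set α) (hA : μ A ≠ ⊤) (hA0 : μ A ≠ 0)
    (u : α → ℝ) (hu : Measurable u) (γ : ℝ) (hγ : 0 < γ) (hγ' : γ ≤ 1 / 2) :
    med μ γ (fun x => |u x - med μ γ u A|) A
      ≤ 2 * ⨅ c : ℝ, med μ γ (fun x => |u x - c|) A := by
  set m := med μ γ u A
  have hne : ∀ c, (medSet μ γ (fun x => |u x - c|) A).Nonempty := fun c =>
    medSet_nonempty hA hA0 hγ (hu.sub_const c).abs
  have hbdd : ∀ f, BddBelow (medSet μ γ f A) := fun f => medSet_bddBelow hA hA0 (by linarith)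
  have hle : ∀ c, med μ γ (fun x => |u x - m|) A ≤ 2 * med μ γ (fun x => |u x - c|) A := by
    intro c
    have hupper : m ≤ med μ γ (fun x => |u x - c|) A + c :=
      med_le_med_add (hbdd u) (hne c) c fun x _ => by linarith [le_abs_self (u x - c)]
    have hlower : c ≤ m + med μ γ (fun x => |u x - c|) A :=
      le_med_add_med hγ' (medSet_nonempty hA hA0 hγ hu) (hne c) c fun x _ => by
        linarith [neg_abs_le (u x - c)]
    have htriangle : med μ γ (fun x => |u x - m|) A ≤ med μ γ (fun x => |u x - c|) A + |m - c| :=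
      med_le_med_add (hbdd _) (hne c) _ fun x _ => by
        linarith [abs_sub_le (u x) c m, abs_sub_comm c m]
    have hdist : |m - c| ≤ med μ γ (fun x => |u x - c|) A :=
      abs_sub_le_iff.2 ⟨by linarith, by linarith⟩
    linarith
  have := le_ciInf fun c => (div_le_iff₀' two_pos).2 (hle c)
  linarith
end

section
/- The Besov capacity is an outer capacity: for every $E \subset X$, $C_{p,q}^s(E) = \inf\{C_{p,q}^s(U) : U \supset E,\ U \text{ open}\}$. -/
open MeasureTheory ENNReal

variable {X : Type*} [MetricSpace X] [MeasurableSpace X] [OpensMeasurableSpace X]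

/-- The `ℓ^q`-norm of a sequence of extended nonnegative reals. -/
noncomputable def ellq (q : ℝ≥0∞) (a : ℤ → ℝ≥0∞) : ℝ≥0∞ :=
  if q = ∞ then ⨆ k, a k else (∑' k, a k ^ q.toReal) ^ (1 / q.toReal)

/-- The `L^p`-norm of an `ℝ≥0∞`-valued function. -/
noncomputable def lpNormE (μ : Measure X) (p : ℝ≥0∞) (f : X → ℝ≥0∞) : ℝ≥0∞ :=
  if p = ∞ then essSup f μ else (∫⁻ x, f x ^ p.toReal ∂μ) ^ (1 / p.toReal)

/-- The homogeneous Hajłasz–Besov seminorm. -/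
noncomputable def besovSemi (μ : Measure X) (s : ℝ) (p q : ℝ≥0∞) (u : X → ℝ) : ℝ≥0∞ :=
  ⨅ (g : ℤ → X → ℝ≥0∞) (_ : IsFracGrad μ s u g), ellq q fun k => lpNormE μ p (g k)

/-- The Hajłasz–Besov (quasi)norm `‖u‖_{L^p} + ‖u‖_{Ṅ^s_{p,q}}`. -/
noncomputable def besovNorm (μ : Measure X) (s : ℝ) (p q : ℝ≥0∞) (u : X → ℝ) : ℝ≥0∞ :=
  eLpNorm u p μ + besovSemi μ s p q u

/-- `u` belongs to the Hajłasz–Besov space `N^s_{p,q}(X)`. -/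
def MemBesov (μ : Measure X) (s : ℝ) (p q : ℝ≥0∞) (u : X → ℝ) : Prop :=
  MemLp u p μ ∧ besovNorm μ s p q u < ⊤

/-- `u` is admissible for the Besov capacity of `E`:
`u ∈ N^s_{p,q}(X)` and `u ≥ 1` on a neighbourhood of `E`. -/
def BesovAdmissible (μ : Measure X) (s : ℝ) (p q : ℝ≥0∞) (E : Set X) (u : X → ℝ) : Prop :=
  MemBesov μ s p q u ∧ ∃ U : Set X, IsOpen U ∧ E ⊆ U ∧ ∀ x ∈ U, 1 ≤ u x

/-- The Besov capacity `C^s_{p,q}(E)`. -/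
noncomputable def besovCapacity (μ : Measure X) (s : ℝ) (p q : ℝ≥0∞) (E : Set X) : ℝ≥0∞ :=
  ⨅ (u : X → ℝ) (_ : BesovAdmissible μ s p q E u), besovNorm μ s p q u ^ p.toReal

section

variable {Y : Type*} [MetricSpace Y] [MeasurableSpace Y] {μ : Measure Y} {s : ℝ} {p q : ℝ≥0∞}

theorem BesovAdmissible.mono {E F : Set Y} {u : Y → ℝ} (hEF : E ⊆ F)
    (hu : BesovAdmissible μ s p q F u) : BesovAdmissible μ s p q E u := by
  obtain ⟨hmem, U, hU, hFU, hU1⟩ := hu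
  exact ⟨hmem, U, hU, hEF.trans hFU, hU1⟩

theorem BesovAdmissible.exists_isOpen {E : Set Y} {u : Y → ℝ}
    (hu : BesovAdmissible μ s p q E u) :
    ∃ U, (IsOpen U ∧ E ⊆ U) ∧ BesovAdmissible μ s p q U u := by
  obtain ⟨hmem, U, hU, hEU, hU1⟩ := hu
  exact ⟨U, ⟨hU, hEU⟩, hmem, U, hU, subset_rfl, hU1⟩

theorem besovCapacity_mono {E F : Set Y} (hEF : E ⊆ F) :
    besovCapacity μ s p q E ≤ besovCapacity μ s p q F :=
  le_iInf₂ fun u hu => iInf₂_le u (hu.mono hEF)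

end

theorem besovCapacity_outer_general (μ : Measure X)
    (s : ℝ) (p q : ℝ≥0∞) (E : Set X) :
    besovCapacity μ s p q E =
      ⨅ (U : Set X) (_ : IsOpen U ∧ E ⊆ U), besovCapacity μ s p q U := by
  refine le_antisymm (le_iInf₂ fun U hU => besovCapacity_mono hU.2) ?_
  refine le_iInf₂ fun u hu => ?_
  obtain ⟨U, hU, huU⟩ := hu.exists_isOpen
  exact (iInf₂_le U hU).trans (iInf₂_le u huU)

theorem besovCapacity_outer (μ : Measure X) [IsUnifLocDoublingMeasure μ]
    (s : ℝ) (hs : 0 < s) (p q : ℝ≥0∞) (hp : 0 < p) (hq : 0 < q) (E : Set X) :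
    besovCapacity μ s p q E =
      ⨅ (U : Set X) (_ : IsOpen U ∧ E ⊆ U), besovCapacity μ s p q U :=
  besovCapacity_outer_general μ s p q E
end
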